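/- arXiv:1407.1935 — 3 statements merged into one kernel-verified Lean document; each statement's English description precedes it below -/
import Mathlib

section
/- For integers N > 1 and K with K ≥ N, we have N - 1 + min((K-1)/(2N), 1 - 1/K) > N - N/K, i.e., the rate R_c(1/K) = N - 1 + min((K-1)/(2N), 1 - 1/K) strictly exceeds the rate R(1/K) = N(1 - 1/K). -/
/-!
After cancelling `N - 1`, the claim is `1 - N/K < min ((K-1)/(2N)) (1 - 1/K)`. The bound by
`1 - 1/K` is immediate from `N > 1`; the bound by `(K-1)/(2N)` is the quadratic inequality
`K(K-1) - 2N(K-N) = (K - N - 1/2)^2 + N^2 - N - 1/4 > 0`, valid for every real `K` once `N ≥ 2`.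
-/

lemma two_mul_mul_sub_lt_mul_sub_one {N : ℝ} (hN : 2 ≤ N) (K : ℝ) :
    2 * N * (K - N) < K * (K - 1) := by
  nlinarith [sq_nonneg (K - N - 1 / 2)]

lemma one_sub_div_lt_sub_one_div_two_mul {N K : ℝ} (hN : 2 ≤ N) (hK : 0 < K) :
    1 - N / K < (K - 1) / (2 * N) := by
  rw [one_sub_div hK.ne', div_lt_div_iff₀ hK (by positivity)]
  linarith [two_mul_mul_sub_lt_mul_sub_one hN K]

theorem stmt_1 (N K : ℕ) (hN : 1 < N) (hK : N ≤ K) :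
    (N : ℝ) - 1 + min (((K : ℝ) - 1) / (2 * N)) (1 - 1 / K) >
      (N : ℝ) * (1 - 1 / K) := by
  have hN2 : (2 : ℝ) ≤ N := by exact_mod_cast hN
  have hK0 : (0 : ℝ) < K := by
    have : (N : ℝ) ≤ K := by exact_mod_cast hK
    linarith
  have hlt_left := one_sub_div_lt_sub_one_div_two_mul hN2 hK0
  have hlt_right : 1 - (N : ℝ) / K < 1 - 1 / K :=
    sub_lt_sub_left (div_lt_div_of_pos_right (by linarith) hK0) 1
  have hlt_min := lt_min hlt_left hlt_right
  have hrate : (N : ℝ) * (1 - 1 / K) = N - 1 + (1 - N / K) := by ring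
  rw [hrate, gt_iff_lt]
  linarith
end

section
/- For positive integers N ≤ K and real M with 0 ≤ M ≤ 1/K, the rate N(1 - M) achieves the cut-set bound, i.e., the maximum over s ∈ {1,…,N} of (s - s·M/⌊N/s⌋) equals N - N·M. -/
theorem stmt_4 (N K : ℕ) (hN : 1 ≤ N) (hK : N ≤ K) (M : ℝ) (hM0 : 0 ≤ M)
    (hM1 : M ≤ 1 / K) :
    (Finset.Icc 1 N).sup' (Finset.nonempty_Icc.mpr hN)
        (fun s => (s : ℝ) - (s : ℝ) / ((N / s : ℕ) : ℝ) * M) =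
      (N : ℝ) - (N : ℝ) * M := by
  have hN0r : (0:ℝ) < N := by exact_mod_cast hN
  have hK0r : (0:ℝ) < K := lt_of_lt_of_le hN0r (by exact_mod_cast hK)
  have hMN : M ≤ 1 / N := hM1.trans (by
    apply one_div_le_one_div_of_le hN0r
    exact_mod_cast hK)
  have hNM1 : (N:ℝ) * M ≤ 1 := by
    have := mul_le_mul_of_nonneg_left hMN hN0r.le
    rwa [mul_one_div, div_self hN0r.ne'] at this
  apply le_antisymm
  · apply Finset.sup'_le
    intro s hs
    obtain ⟨hs1, hsN⟩ := Finset.mem_Icc.mp hs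
    have hq : 1 ≤ N / s := (Nat.one_le_div_iff (by omega)).mpr hsN
    have hqR : (1:ℝ) ≤ ((N / s : ℕ) : ℝ) := by exact_mod_cast hq
    have hs0 : (0:ℝ) ≤ s := by positivity
    have hsq : 0 ≤ (s:ℝ) / ((N / s : ℕ) : ℝ) := by positivity
    rcases eq_or_lt_of_le hsN with h | h
    · subst h
      rw [Nat.div_self hN]
      norm_num
    · have hlt : (s:ℝ) + 1 ≤ N := by exact_mod_cast h
      have hm : 0 ≤ (s:ℝ) / ((N / s : ℕ) : ℝ) * M := mul_nonneg hsq hM0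
      linarith
  · have hmem : N ∈ Finset.Icc 1 N := Finset.mem_Icc.mpr ⟨hN, le_refl N⟩
    have := Finset.le_sup' (fun s : ℕ => (s : ℝ) - (s : ℝ) / ((N / s : ℕ) : ℝ) * M) hmem
    rwa [Nat.div_self hN, Nat.cast_one, div_one] at this
end

section
/- For all real M with 0 ≤ M ≤ 1/K and integers 1 ≤ N ≤ K, the function M ↦ N(1−M) lies weakly below the line segment from (0, N) to (N/K, min((K−1)/2, N(K−1)/K)), i.e., N(1−M) ≤ N + (min((K−1)/2, N(K−1)/K) − N)·(M·K/N) for M ∈ [0, 1/K], provided N ≥ 2. -/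
/-!
Both sides are affine in `M` and agree at `M = 0`, so it suffices to compare slopes:
`-N ≤ (R - N) K / N` with `R = min ((K - 1) / 2) (N (K - 1) / K)`, i.e. `N (K - N) ≤ R K`.
For the two branches of the minimum this is `2 N (K - N) ≤ K (K - 1)` and `N (K - N) ≤ N (K - 1)`,
whose differences are `(K - N)(K - N - 1) + N (N - 1)` and `N (N - 1)`: sums of products of two
consecutive integers, hence nonnegative.
-/

theorem Int.mul_sub_one_nonneg (m : ℤ) : 0 ≤ m * (m - 1) := by
  rcases le_or_gt m 0 with hm | hm
  · exact mul_nonneg_of_nonpos_of_nonpos hm (by omega)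
  · exact mul_nonneg hm.le (by omega)

theorem natCast_mul_sub_le_min_mul (n k : ℕ) :
    (n : ℝ) * (k - n) ≤ min (((k : ℝ) - 1) / 2) ((n : ℝ) * ((k : ℝ) - 1) / k) * k := by
  have hn : (0 : ℝ) ≤ n * (n - 1) := by exact_mod_cast Int.mul_sub_one_nonneg n
  have hkn : (0 : ℝ) ≤ (k - n) * (k - n - 1) := by exact_mod_cast Int.mul_sub_one_nonneg (k - n)
  rw [min_mul_of_nonneg _ _ k.cast_nonneg]
  refine le_min (by linear_combination (hkn + hn) / 2) ?_
  rcases eq_or_ne k 0 with rfl | hk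
  · simp only [Nat.cast_zero, zero_sub, mul_zero, mul_neg]
    exact neg_nonpos.mpr (mul_self_nonneg _)
  · rw [div_mul_cancel₀ _ (Nat.cast_ne_zero.mpr hk)]
    linear_combination hn

theorem neg_natCast_le_min_sub_mul_div (n k : ℕ) :
    -(n : ℝ) ≤ (min (((k : ℝ) - 1) / 2) ((n : ℝ) * ((k : ℝ) - 1) / k) - n) * k / n := by
  rcases n.eq_zero_or_pos with rfl | hn
  · simp
  · rw [le_div_iff₀ (Nat.cast_pos.mpr hn)]
    linear_combination natCast_mul_sub_le_min_mul n k

theorem stmt_18_general (N K : ℕ) (M : ℝ) (hM0 : 0 ≤ M) :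
    (N : ℝ) * (1 - M) ≤
      (N : ℝ) + (min (((K : ℝ) - 1) / 2) ((N : ℝ) * ((K : ℝ) - 1) / K) - N) *
        (M * K / N) := by
  calc (N : ℝ) * (1 - M) = N + M * -N := by ring
    _ ≤ N + M * ((min (((K : ℝ) - 1) / 2) ((N : ℝ) * ((K : ℝ) - 1) / K) - N) * K / N) := by
        gcongr
        exact neg_natCast_le_min_sub_mul_div N K
    _ = _ := by ring

theorem stmt_18 (N K : ℕ) (hN : 2 ≤ N) (hK : N ≤ K) (M : ℝ) (hM0 : 0 ≤ M)
    (hM1 : M ≤ 1 / K) :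
    (N : ℝ) * (1 - M) ≤
      (N : ℝ) + (min (((K : ℝ) - 1) / 2) ((N : ℝ) * ((K : ℝ) - 1) / K) - N) *
        (M * K / N) :=
  stmt_18_general N K M hM0
end
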